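/- Let (X, f_{1,∞}) be a periodic non-autonomous system on a T₃ space X (regular Hausdorff) whose induced map g has a transitive point. If x is a transitive point of (X, f_{1,∞}) and there exists y ∈ X with (x,y) not an equicontinuity pair, then (X, f_{1,∞}) is Hausdorff sensitive. -/

import Mathlib

open Topology Filter Set
open scoped Uniformity

/-- `traj f n = f_n ∘ ⋯ ∘ f_1` (and `traj f 0 = id`), i.e. `f_1^n`. -/
def traj {X : Type*} (f : ℕ → X → X) : ℕ → X → X
  | 0 => id
  | n + 1 => f (n + 1) ∘ traj f n

/-- The family `f` is periodic with period `p`. -/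
def PeriodicFam {X : Type*} (f : ℕ → X → X) (p : ℕ) : Prop :=
  ∀ n, f (n + p) = f n

/-- A set of naturals is thick: it contains arbitrarily long blocks of consecutive integers. -/
def Thick (T : Set ℕ) : Prop :=
  ∀ k : ℕ, ∃ n : ℕ, ∀ i ≤ k, n + i ∈ T

/-- A set of naturals is syndetic: it has bounded gaps. -/
def Syndetic (S : Set ℕ) : Prop :=
  ∃ M : ℕ, ∀ n : ℕ, ∃ m ∈ S, n ≤ m ∧ m ≤ n + M

/-- `x` is a transitive point of the non-autonomous system `(X, f_{1,∞})`. -/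
def TransPt {X : Type*} [TopologicalSpace X] (f : ℕ → X → X) (x : X) : Prop :=
  Dense (Set.range fun n => traj f n x)

/-- `x` is a transitive point of the autonomous system `(X, g)`. -/
def TransPtAut {X : Type*} [TopologicalSpace X] (g : X → X) (x : X) : Prop :=
  Dense (Set.range fun n => g^[n] x)

/-- `x` is an equicontinuity point of `(X, f_{1,∞})` on a uniform space. -/
def EqPt {X : Type*} [UniformSpace X] (f : ℕ → X → X) (x : X) : Prop :=
  ∀ E ∈ 𝓤 X, ∃ D ∈ 𝓤 X, ∀ y : X, (x, y) ∈ D → ∀ n : ℕ, (traj f n x, traj f n y) ∈ E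

/-- `x` is a syndetically equicontinuous point of `(X, f_{1,∞})`. -/
def SynEqPt {X : Type*} [UniformSpace X] (f : ℕ → X → X) (x : X) : Prop :=
  ∀ E ∈ 𝓤 X, ∃ U ∈ 𝓝 x,
    Syndetic {n : ℕ | ∀ x₁ ∈ U, ∀ x₂ ∈ U, (traj f n x₁, traj f n x₂) ∈ E}

/-- `x` is a syndetically equicontinuous point of the autonomous system `(X, g)`. -/
def SynEqPtAut {X : Type*} [UniformSpace X] (g : X → X) (x : X) : Prop :=
  ∀ E ∈ 𝓤 X, ∃ U ∈ 𝓝 x,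
    Syndetic {n : ℕ | ∀ x₁ ∈ U, ∀ x₂ ∈ U, (g^[n] x₁, g^[n] x₂) ∈ E}

/-- `N(U, D)` for the non-autonomous system. -/
def NSet {X : Type*} (f : ℕ → X → X) (U : Set X) (D : Set (X × X)) : Set ℕ :=
  {n : ℕ | 0 < n ∧ ∃ x ∈ U, ∃ y ∈ U, (traj f n x, traj f n y) ∉ D}

/-- `N(U, D)` for the autonomous system. -/
def NSetAut {X : Type*} (g : X → X) (U : Set X) (D : Set (X × X)) : Set ℕ :=
  {n : ℕ | 0 < n ∧ ∃ x ∈ U, ∃ y ∈ U, (g^[n] x, g^[n] y) ∉ D}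

/-- Sensitivity of `(X, f_{1,∞})`. -/
def Sensitive {X : Type*} [UniformSpace X] (f : ℕ → X → X) : Prop :=
  ∃ D ∈ 𝓤 X, ∀ U : Set X, IsOpen U → U.Nonempty → (NSet f U D).Nonempty

/-- Thick sensitivity of `(X, f_{1,∞})`. -/
def ThickSensitive {X : Type*} [UniformSpace X] (f : ℕ → X → X) : Prop :=
  ∃ D ∈ 𝓤 X, ∀ U : Set X, IsOpen U → U.Nonempty → Thick (NSet f U D)

/-- Thick sensitivity of the autonomous system `(X, g)`. -/
def ThickSensitiveAut {X : Type*} [UniformSpace X] (g : X → X) : Prop :=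
  ∃ D ∈ 𝓤 X, ∀ U : Set X, IsOpen U → U.Nonempty → Thick (NSetAut g U D)

/-- Multi-sensitivity of `(X, f_{1,∞})`. -/
def MultiSensitive {X : Type*} [UniformSpace X] (f : ℕ → X → X) : Prop :=
  ∃ D ∈ 𝓤 X, ∀ (k : ℕ) (U : Fin (k + 1) → Set X),
    (∀ i, IsOpen (U i)) → (∀ i, (U i).Nonempty) → (⋂ i, NSet f (U i) D).Nonempty

/-- Multi-sensitivity of the autonomous system `(X, g)`. -/
def MultiSensitiveAut {X : Type*} [UniformSpace X] (g : X → X) : Prop :=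
  ∃ D ∈ 𝓤 X, ∀ (k : ℕ) (U : Fin (k + 1) → Set X),
    (∀ i, IsOpen (U i)) → (∀ i, (U i).Nonempty) → (⋂ i, NSetAut g (U i) D).Nonempty

/-- Eventual sensitivity of `(X, f_{1,∞})` with a given entourage `D`. -/
def EvSensitiveWith {X : Type*} [UniformSpace X] (f : ℕ → X → X) (D : Set (X × X)) : Prop :=
  ∀ x : X, ∀ E ∈ 𝓤 X, ∃ n k : ℕ, 0 < n ∧ 0 < k ∧
    ∃ y : X, (traj f n x, y) ∈ E ∧ (traj f (n + k) x, traj f k y) ∉ D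

/-- Eventual sensitivity of `(X, f_{1,∞})`. -/
def EvSensitive {X : Type*} [UniformSpace X] (f : ℕ → X → X) : Prop :=
  ∃ D ∈ 𝓤 X, EvSensitiveWith f D

/-- Eventual sensitivity of the autonomous system `(X, g)` with entourage `D`. -/
def EvSensitiveAutWith {X : Type*} [UniformSpace X] (g : X → X) (D : Set (X × X)) : Prop :=
  ∀ x : X, ∀ E ∈ 𝓤 X, ∃ q k : ℕ, 0 < q ∧ 0 < k ∧
    ∃ y : X, (g^[q] x, y) ∈ E ∧ (g^[q + k] x, g^[k] y) ∉ D

/-- `(x, y)` is a (topological) equicontinuity pair for `(X, f_{1,∞})`. -/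
def EqPair {X : Type*} [TopologicalSpace X] (f : ℕ → X → X) (x y : X) : Prop :=
  ∀ O ∈ 𝓝 y, ∃ U ∈ 𝓝 x, ∃ V ∈ 𝓝 y, ∀ n : ℕ, 0 < n →
    ((traj f n '' U) ∩ V).Nonempty → traj f n '' U ⊆ O

/-- `(x, y)` is a syndetic equicontinuity pair for `(X, f_{1,∞})`. -/
def SynEqPair {X : Type*} [TopologicalSpace X] (f : ℕ → X → X) (x y : X) : Prop :=
  ∀ O ∈ 𝓝 y, ∃ U ∈ 𝓝 x, ∃ V ∈ 𝓝 y,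
    Syndetic {n : ℕ | ((traj f n '' U) ∩ V).Nonempty → traj f n '' U ⊆ O}

/-- `O` is a splitting neighborhood of `y` with respect to `x`. -/
def SplittingNbhd {X : Type*} [TopologicalSpace X] (f : ℕ → X → X) (x y : X) (O : Set X) :
    Prop :=
  O ∈ 𝓝 y ∧ ∀ U ∈ 𝓝 x, ∀ V ∈ 𝓝 y, ∃ n : ℕ, 0 < n ∧
    ((traj f n '' U) ∩ V).Nonempty ∧ ¬ traj f n '' U ⊆ O

/-- A finite open cover of `X`. -/
def IsFinOpenCover {X : Type*} [TopologicalSpace X] (𝒰 : Finset (Set X)) : Prop :=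
  (∀ U ∈ 𝒰, IsOpen U) ∧ ⋃₀ (↑𝒰 : Set (Set X)) = Set.univ

/-- `N(V, 𝒰)`: times at which `f_1^n(V)` is not contained in any single member of `𝒰`. -/
def HNSet {X : Type*} (f : ℕ → X → X) (V : Set X) (𝒰 : Finset (Set X)) : Set ℕ :=
  {n : ℕ | 0 < n ∧ ∀ U ∈ 𝒰, ¬ traj f n '' V ⊆ U}

/-- `N(V, 𝒰)` for the autonomous system. -/
def HNSetAut {X : Type*} (g : X → X) (V : Set X) (𝒰 : Finset (Set X)) : Set ℕ :=
  {n : ℕ | 0 < n ∧ ∀ U ∈ 𝒰, ¬ g^[n] '' V ⊆ U}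

/-- Hausdorff sensitivity of `(X, f_{1,∞})`. -/
def HSensitive {X : Type*} [TopologicalSpace X] (f : ℕ → X → X) : Prop :=
  ∃ 𝒰 : Finset (Set X), IsFinOpenCover 𝒰 ∧
    ∀ V : Set X, IsOpen V → V.Nonempty → (HNSet f V 𝒰).Nonempty

/-- Hausdorff sensitivity of the autonomous system `(X, g)`. -/
def HSensitiveAut {X : Type*} [TopologicalSpace X] (g : X → X) : Prop :=
  ∃ 𝒰 : Finset (Set X), IsFinOpenCover 𝒰 ∧
    ∀ V : Set X, IsOpen V → V.Nonempty → (HNSetAut g V 𝒰).Nonempty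

/-- Thick Hausdorff sensitivity of `(X, f_{1,∞})`. -/
def ThickHSensitive {X : Type*} [TopologicalSpace X] (f : ℕ → X → X) : Prop :=
  ∃ 𝒰 : Finset (Set X), IsFinOpenCover 𝒰 ∧
    ∀ V : Set X, IsOpen V → V.Nonempty → Thick (HNSet f V 𝒰)

/-- Thick Hausdorff sensitivity of the autonomous system `(X, g)`. -/
def ThickHSensitiveAut {X : Type*} [TopologicalSpace X] (g : X → X) : Prop :=
  ∃ 𝒰 : Finset (Set X), IsFinOpenCover 𝒰 ∧
    ∀ V : Set X, IsOpen V → V.Nonempty → Thick (HNSetAut g V 𝒰)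

/-- Multi-Hausdorff sensitivity of the autonomous system `(X, g)`. -/
def MultiHSensitiveAut {X : Type*} [TopologicalSpace X] (g : X → X) : Prop :=
  ∃ 𝒰 : Finset (Set X), IsFinOpenCover 𝒰 ∧
    ∀ (m : ℕ) (V : Fin (m + 1) → Set X),
      (∀ i, IsOpen (V i)) → (∀ i, (V i).Nonempty) → (⋂ i, HNSetAut g (V i) 𝒰).Nonempty

/-!
If `(x, y)` is not an equicontinuity pair, then there are an open `A` and a closed
neighbourhood `B ⊆ A` of `y` such that every neighbourhood `U` of `x` is *split* at some time
`n`: `f_1^n(U)` meets `B` but is not contained in `A`. Since failing to split at a fixed time is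
an open condition at `x`, splitting times are unbounded; in particular `X` has no isolated
points. The key step is that `x` is also a transitive point of `g = f_1^p`: the phase closures
`C_r = cl (f_1^r (g-orbit of x))`, `r < p`, cover `X`, so one of them has interior; the
`g`-orbit of the transitive point of `g` enters that interior at phase `r`, and so, one period
later, stays in `cl (g-orbit of x)` from then on; as `X` has no isolated points this closure is
all of `X`. Now any nonempty open `V` contains some `g^k x`, and a splitting time `n > kp` of
`g^{-k}(V)` gives the splitting time `n - kp` of `V`, for the cover `{A, (cl B)ᶜ}`.
-/

section

variable {X : Type*}

theorem traj_add (f : ℕ → X → X) (m : ℕ) :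
    ∀ n, traj f (m + n) = traj (fun i => f (m + i)) n ∘ traj f m
  | 0 => rfl
  | n + 1 => by
    change f (m + n + 1) ∘ traj f (m + n) = f (m + (n + 1)) ∘ traj _ n ∘ traj f m
    rw [traj_add f m n]
    rfl

theorem continuous_traj {f : ℕ → X → X} [TopologicalSpace X] (hf : ∀ n, Continuous (f n)) :
    ∀ n, Continuous (traj f n)
  | 0 => continuous_id
  | n + 1 => (hf (n + 1)).comp (continuous_traj hf n)

theorem PeriodicFam.traj_mul_add {f : ℕ → X → X} {p : ℕ} (hper : PeriodicFam f p) :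
    ∀ k n, traj f (k * p + n) = traj f n ∘ (traj f p)^[k]
  | 0, n => by simp
  | k + 1, n => by
    have hshift : (fun i => f (p + i)) = f := funext fun i => by rw [add_comm, hper]
    rw [show (k + 1) * p + n = k * p + (p + n) by ring, hper.traj_mul_add k, traj_add, hshift,
      Function.iterate_succ']
    rfl

theorem exists_nonempty_interior_of_biUnion_eq_univ [TopologicalSpace X] [Nonempty X]
    {ι : Type*} {C : ι → Set X} (s : Finset ι) (hC : ∀ i ∈ s, IsClosed (C i))
    (hs : ⋃ i ∈ s, C i = univ) : ∃ i ∈ s, (interior (C i)).Nonempty := by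
  classical
  by_contra! hint
  suffices interior (⋃ i ∈ s, C i) = ∅ by simp [hs] at this
  clear hs
  induction s using Finset.induction_on with
  | empty => simp
  | insert j s _ ih =>
    simp only [Finset.mem_insert, forall_eq_or_imp] at hC hint
    rw [Finset.set_biUnion_insert, union_comm,
      interior_union_isClosed_of_interior_empty (isClosed_biUnion_finset hC.2) hint.1]
    exact ih hC.2 hint.2

section Splitting

variable {f : ℕ → X → X} {A B U V : Set X} {m n : ℕ}

def SplitsAt (f : ℕ → X → X) (A B U : Set X) (n : ℕ) : Prop :=
  (traj f n '' U ∩ B).Nonempty ∧ ¬ traj f n '' U ⊆ A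

theorem SplitsAt.mono (h : SplitsAt f A B U n) (hUV : traj f n '' U ⊆ traj f m '' V) :
    SplitsAt f A B V m :=
  ⟨h.1.mono (inter_subset_inter_left B hUV), fun hV => h.2 (hUV.trans hV)⟩

theorem SplitsAt.not_subsingleton (h : SplitsAt f A B U n) (hBA : B ⊆ A) :
    ¬ (traj f n '' U).Subsingleton := by
  intro hsub
  obtain ⟨b, hbU, hbB⟩ := h.1
  exact h.2 fun c hc => hsub hc hbU ▸ hBA hbB

variable [TopologicalSpace X]

theorem exists_mem_nhds_forall_subset_not_splitsAt (hc : Continuous (traj f n)) (hA : IsOpen A)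
    (hBA : closure B ⊆ A) (x : X) : ∃ S ∈ 𝓝 x, ∀ U ⊆ S, ¬ SplitsAt f A B U n := by
  by_cases hxA : traj f n x ∈ A
  · refine ⟨traj f n ⁻¹' A, hc.continuousAt.preimage_mem_nhds (hA.mem_nhds hxA),
      fun U hU h => h.2 (image_subset_iff.2 hU)⟩
  · have hxB : traj f n x ∈ (closure B)ᶜ := fun h => hxA (hBA h)
    refine ⟨traj f n ⁻¹' (closure B)ᶜ,
      hc.continuousAt.preimage_mem_nhds (isClosed_closure.isOpen_compl.mem_nhds hxB), ?_⟩
    rintro U hU ⟨⟨_, ⟨u, hu, rfl⟩, hB⟩, -⟩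
    exact hU hu (subset_closure hB)

theorem exists_splitsAt_gt (hf : ∀ n, Continuous (f n)) (hA : IsOpen A) (hBA : closure B ⊆ A)
    {x : X} (hsplit : ∀ U ∈ 𝓝 x, ∃ n, SplitsAt f A B U n) (hU : U ∈ 𝓝 x) (M : ℕ) :
    ∃ n, M < n ∧ SplitsAt f A B U n := by
  choose S hS hnot using fun n => exists_mem_nhds_forall_subset_not_splitsAt
    (continuous_traj hf n) hA hBA (f := f) x
  obtain ⟨n, hn⟩ := hsplit (U ∩ ⋂ n ∈ Finset.range (M + 1), S n)
    (inter_mem hU ((Finset.range (M + 1)).iInter_mem_sets.2 fun n _ => hS n))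
  refine ⟨n, ?_, hn.mono (image_mono inter_subset_left)⟩
  by_contra! hnM
  exact hnot n _ (inter_subset_right.trans (biInter_subset_of_mem (by simpa [Nat.lt_succ_iff])))
    hn

theorem perfectSpace_of_splitsAt (hf : ∀ n, Continuous (f n)) (hA : IsOpen A)
    (hBA : closure B ⊆ A) {x : X} (hx : TransPt f x)
    (hsplit : ∀ U ∈ 𝓝 x, ∃ n, SplitsAt f A B U n) : PerfectSpace X := by
  refine (perfectSpace_iff_forall_not_isolated).2 fun a => neBot_iff.2 fun ha => ?_
  rw [← isOpen_singleton_iff_punctured_nhds] at ha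
  obtain ⟨_, ⟨m, rfl⟩, hm⟩ := Dense.exists_mem_open hx ha ⟨a, rfl⟩
  obtain ⟨n, hmn, hn⟩ := exists_splitsAt_gt hf hA hBA hsplit
    ((ha.preimage (continuous_traj hf m)).mem_nhds hm) m
  obtain ⟨t, rfl⟩ := Nat.exists_eq_add_of_le hmn.le
  refine hn.not_subsingleton (subset_closure.trans hBA)
    ((subsingleton_singleton (a := traj (fun i => f (m + i)) t a)).anti ?_)
  rintro _ ⟨u, hu, rfl⟩
  rw [traj_add, Function.comp_apply, mem_preimage.1 hu]
  rfl

end Splitting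

section Transitivity

variable [TopologicalSpace X]

theorem TransPtAut.eq_univ_of_iterate_mem [T1Space X] [PerfectSpace X] {g : X → X} {z : X}
    (hz : TransPtAut g z) {D : Set X} (hD : IsClosed D) (hgD : MapsTo g D D) {k : ℕ}
    (hk : g^[k] z ∈ D) : D = univ := by
  have horbit : range (fun n => g^[n] z) ⊆ D ∪ (fun n => g^[n] z) '' Iio k := by
    rintro _ ⟨n, rfl⟩
    rcases lt_or_ge n k with hnk | hkn
    · exact Or.inr ⟨n, hnk, rfl⟩
    · obtain ⟨j, rfl⟩ := Nat.exists_eq_add_of_le hkn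
      left
      change g^[k + j] z ∈ D
      rw [add_comm, Function.iterate_add_apply]
      exact hgD.iterate j hk
  have hfin : ((fun n => g^[n] z) '' Iio k).Finite := (finite_Iio k).image _
  have hcover : Dᶜ ⊆ (fun n => g^[n] z) '' Iio k := fun a ha =>
    (closure_minimal horbit (hD.union hfin.isClosed) (hz.closure_eq ▸ mem_univ a)).resolve_left ha
  by_contra hne
  obtain ⟨a, ha⟩ := nonempty_compl.2 hne
  exact infinite_of_mem_nhds a (hD.isOpen_compl.mem_nhds ha) (hfin.subset hcover)

variable {f : ℕ → X → X} {p : ℕ} {x : X}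

theorem TransPt.exists_nonempty_interior_closure_traj_image (hper : PeriodicFam f p) (hp : 0 < p)
    (hx : TransPt f x) :
    ∃ r < p, (interior (closure (traj f r '' range fun k => (traj f p)^[k] x))).Nonempty := by
  have : Nonempty X := ⟨x⟩
  have horbit : range (fun m => traj f m x) ⊆
      ⋃ r ∈ Finset.range p, closure (traj f r '' range fun k => (traj f p)^[k] x) := by
    rintro _ ⟨m, rfl⟩
    refine mem_iUnion₂.2 ⟨m % p, Finset.mem_range.2 (Nat.mod_lt m hp), subset_closure ?_⟩
    refine ⟨(traj f p)^[m / p] x, mem_range_self _, ?_⟩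
    rw [← Function.comp_apply (f := traj f (m % p)), ← hper.traj_mul_add, Nat.div_add_mod']
  simpa using exists_nonempty_interior_of_biUnion_eq_univ (Finset.range p)
    (fun r _ => isClosed_closure) <| eq_univ_of_univ_subset <| hx.closure_eq ▸
      closure_minimal horbit (isClosed_biUnion_finset fun r _ => isClosed_closure)

theorem TransPt.transPtAut_traj [T1Space X] [PerfectSpace X] (hf : ∀ n, Continuous (f n))
    (hper : PeriodicFam f p) (hp : 0 < p) (hx : TransPt f x) {z : X}
    (hz : TransPtAut (traj f p) z) : TransPtAut (traj f p) x := by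
  set g := traj f p
  set D := closure (range fun k => g^[k] x)
  have hgD : MapsTo g D D := by
    refine MapsTo.closure ?_ (continuous_traj hf p)
    rintro _ ⟨k, rfl⟩
    exact ⟨k + 1, Function.iterate_succ_apply' g k x⟩
  obtain ⟨r, hr, w, hw⟩ := hx.exists_nonempty_interior_closure_traj_image hper hp
  set C := closure (traj f r '' range fun k => g^[k] x)
  set σ := traj (fun i => f (r + i)) (p - r)
  have hσ (ξ : X) : σ (traj f r ξ) = g ξ := by
    rw [← Function.comp_apply (f := σ), ← traj_add, Nat.add_sub_cancel' hr.le]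
  have hσD : MapsTo σ C D := by
    refine MapsTo.closure ?_ (continuous_traj (fun n => hf (r + n)) _)
    rintro _ ⟨_, ⟨k, rfl⟩, rfl⟩
    exact ⟨k + 1, by rw [hσ]; exact Function.iterate_succ_apply' g k x⟩
  obtain ⟨_, hξ, ξ, rfl⟩ := mem_closure_iff.1
    (closure_mono (image_subset_range _ _) (interior_subset hw)) _ isOpen_interior hw
  obtain ⟨_, ⟨k, rfl⟩, hk⟩ := Dense.exists_mem_open hz
    (isOpen_interior.preimage (continuous_traj hf r)) ⟨ξ, hξ⟩
  have hkD : g^[k + 1] z ∈ D := by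
    rw [Function.iterate_succ_apply', ← hσ]
    exact hσD (interior_subset hk)
  exact dense_iff_closure_eq.2 (hz.eq_univ_of_iterate_mem isClosed_closure hgD hkD)

end Transitivity

theorem hSensitive_of_splitsAt [TopologicalSpace X] {f : ℕ → X → X} {p : ℕ} {x : X}
    {A B : Set X} (hf : ∀ n, Continuous (f n)) (hper : PeriodicFam f p) (hA : IsOpen A)
    (hBA : closure B ⊆ A) (hx : TransPtAut (traj f p) x)
    (hsplit : ∀ U ∈ 𝓝 x, ∃ n, SplitsAt f A B U n) : HSensitive f := by
  classical
  refine ⟨{A, (closure B)ᶜ}, ⟨?_, ?_⟩, fun V hV hVne => ?_⟩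
  · simpa using And.intro hA (isClosed_closure (s := B)).isOpen_compl
  · simpa [eq_univ_iff_forall, or_iff_not_imp_right] using fun a ha => hBA ha
  obtain ⟨_, ⟨k, rfl⟩, hk⟩ := Dense.exists_mem_open hx hV hVne
  obtain ⟨n, hn, hsp⟩ := exists_splitsAt_gt hf hA hBA hsplit
    ((hV.preimage ((continuous_traj hf p).iterate k)).mem_nhds hk) (k * p)
  obtain ⟨t, rfl⟩ := Nat.exists_eq_add_of_le hn.le
  have hV : SplitsAt f A B V t := hsp.mono <| by
    rw [hper.traj_mul_add, image_comp]
    exact image_mono (image_preimage_subset _ _)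
  refine ⟨t, by omega, ?_⟩
  simp only [Finset.mem_insert, Finset.mem_singleton, forall_eq_or_imp, forall_eq]
  obtain ⟨b, hbV, hbB⟩ := hV.1
  exact ⟨hV.2, fun hsub => hsub hbV (subset_closure hbB)⟩

end

theorem hSensitive_of_not_eqPair {X : Type*} [TopologicalSpace X] [T3Space X]
    (f : ℕ → X → X) (hf : ∀ n, Continuous (f n))
    (p : ℕ) (hp : 0 < p) (hper : PeriodicFam f p)
    (htrans : ∃ x, TransPtAut (traj f p) x)
    (x : X) (hx : TransPt f x) (y : X) (hy : ¬ EqPair f x y) :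
    HSensitive f := by
  obtain ⟨O, hO, hsplit⟩ : ∃ O ∈ 𝓝 y, ∀ U ∈ 𝓝 x, ∀ V ∈ 𝓝 y, ∃ n, 0 < n ∧
      (traj f n '' U ∩ V).Nonempty ∧ ¬ traj f n '' U ⊆ O := by
    simpa [EqPair] using hy
  obtain ⟨B, hBy, hB, hBO⟩ := exists_mem_nhds_isClosed_subset (interior_mem_nhds.2 hO)
  have hBA : closure B ⊆ interior O := hB.closure_eq.symm ▸ hBO
  have hsplitB : ∀ U ∈ 𝓝 x, ∃ n, SplitsAt f (interior O) B U n := fun U hU =>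
    let ⟨n, _, hmeet, hout⟩ := hsplit U hU B hBy
    ⟨n, hmeet, fun h => hout (h.trans interior_subset)⟩
  have := perfectSpace_of_splitsAt hf isOpen_interior hBA hx hsplitB
  obtain ⟨z, hz⟩ := htrans
  exact hSensitive_of_splitsAt hf hper isOpen_interior hBA
    (hx.transPtAut_traj hf hper hp hz) hsplitB
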